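/- arXiv:1305.2142 — 2 statements merged into one kernel-verified Lean document; each statement's English description precedes it below -/
import Mathlib

section
/- Let n ≥ 1, let C = (C_i^j(d)) be any collection of elements of ℚ_α indexed by integers d ≥ 1 and ordered pairs i ≠ j in {1,…,n}, and let η ∈ ℚ_α(x) be such that η(α_i) is well-defined and nonzero for every i. Suppose F, F′ ∈ H_α⟪ħ⟫[[q]] are such that F(α_i,ħ,q) ∈ ℚ_α(ħ)[[q]] for every i and F′ is C-recursive. Then the element {x + ħ·q·d/dq}F′ ∈ H_α⟪ħ⟫[[q]], obtained from F′ by adding the product x·F′ (multiplication by the class x in H_α) and ħ times the formal derivative operator q∂/∂q applied to F′, is again C-recursive; and if in addition the pair (F,F′) satisfies the η-MPC, then so does the pair (F, {x + ħ·q·d/dq}F′). -/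
/-!
Setting: `Kf n = ℚ(α₁,…,αₙ)` is the field of rational functions in `n` variables over `ℚ`,
`Lf n = ℚ_α⟪ħ⟫` is the algebra of Laurent series in `ħ⁻¹` (modeled as Laurent series in the
variable `t = ħ⁻¹`, so that the coefficient of `ħ^r` is the Hahn-series coefficient at `-r`).
An element `F ∈ H_α⟪ħ⟫[[q]]` is modeled by its `n` evaluations `F : Fin n → PowerSeries (Lf n)`
(by the Chinese remainder theorem, `H_α ≅ ∏ᵢ ℚ_α` via `x ↦ (αᵢ)ᵢ`, so this is faithful).
-/

open scoped Classical

noncomputable section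

namespace SQ

/-- The field `ℚ_α = ℚ(α₁,…,αₙ)`. -/
abbrev Kf (n : ℕ) : Type := FractionRing (MvPolynomial (Fin n) ℚ)

/-- The element `αᵢ ∈ ℚ_α`. -/
def alpha (n : ℕ) (i : Fin n) : Kf n :=
  algebraMap (MvPolynomial (Fin n) ℚ) (Kf n) (MvPolynomial.X i)

/-- `ℚ_α⟪ħ⟫`: Laurent series in `t = ħ⁻¹`. -/
abbrev Lf (n : ℕ) : Type := LaurentSeries (Kf n)

/-- `ħ = t⁻¹` where `t` is the Laurent-series variable. -/
def hbar (n : ℕ) : Lf n := HahnSeries.single (-1 : ℤ) 1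

/-- The substitution `ħ ↦ −ħ` on `ℚ_α⟪ħ⟫`. -/
def negH (n : ℕ) (x : Lf n) : Lf n :=
  ⟨fun a => (-1 : Kf n) ^ a * x.coeff a,
    x.isPWO_support'.mono fun a ha => by
      simp only [Function.mem_support] at ha ⊢
      exact fun h => ha (by rw [h, mul_zero])⟩

/-- `x ∈ ℚ_α⟪ħ⟫` lies in (the image of) `ℚ_α(ħ)`, i.e. `Q(ħ)·x = P(ħ)` for some polynomials
`P, Q` with `Q ≠ 0`. -/
def IsRatH (n : ℕ) (x : Lf n) : Prop :=
  ∃ P Q : Polynomial (Kf n), Q ≠ 0 ∧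
    Polynomial.aeval (hbar n) Q * x = Polynomial.aeval (hbar n) P

/-- `x ∈ ℚ_α⟪ħ⟫` is a rational function of `ħ`, regular at `ħ = c`, with value `v` there. -/
def RegEvalAt (n : ℕ) (x : Lf n) (c v : Kf n) : Prop :=
  ∃ P Q : Polynomial (Kf n), Polynomial.eval c Q ≠ 0 ∧
    Polynomial.aeval (hbar n) Q * x = Polynomial.aeval (hbar n) P ∧
    v = Polynomial.eval c P / Polynomial.eval c Q

/-- `x` is a rational function of `ħ` regular at `ħ = c`. -/
def RegAt (n : ℕ) (x : Lf n) (c : Kf n) : Prop := ∃ v : Kf n, RegEvalAt n x c v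

/-- `x` is a Laurent polynomial in `ħ`, i.e. an element of `ℚ_α[ħ,ħ⁻¹]`. -/
def IsLaurentPolyH (n : ℕ) (x : Lf n) : Prop := x.support.Finite

/-- `x` is a polynomial in `ħ`, i.e. an element of `ℚ_α[ħ]`. -/
def IsPolyH (n : ℕ) (x : Lf n) : Prop :=
  ∃ P : Polynomial (Kf n), x = Polynomial.aeval (hbar n) P

/-- Definition 5.1 (`C`-recursivity).  `C d i j` is the structure constant `C_i^j(d)`
(only the values with `d ≥ 1` and `j ≠ i` are used). -/
def CRecursive (n : ℕ) (C : ℕ → Fin n → Fin n → Kf n)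
    (F : Fin n → PowerSeries (Lf n)) : Prop :=
  ∀ dstar : ℕ,
    (∀ d : ℕ, 1 ≤ d → d ≤ dstar → ∀ i : Fin n,
        IsRatH n (PowerSeries.coeff (R := Lf n) (dstar - d) (F i))) →
    (∀ d : ℕ, 1 ≤ d → d < dstar → ∀ i j : Fin n, i ≠ j →
        RegAt n (PowerSeries.coeff (R := Lf n) d (F i))
          ((alpha n i - alpha n j) / (d : Kf n))) →
    ∀ i : Fin n, ∃ v : ℕ → Fin n → Kf n,
      (∀ d : ℕ, ∀ j : Fin n, 1 ≤ d → d ≤ dstar → j ≠ i →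
          RegEvalAt n (PowerSeries.coeff (R := Lf n) (dstar - d) (F j))
            ((alpha n j - alpha n i) / (d : Kf n)) (v d j)) ∧
      IsLaurentPolyH n
        (PowerSeries.coeff (R := Lf n) dstar (F i)
          - ∑ d ∈ Finset.Icc 1 dstar, ∑ j ∈ Finset.univ.erase i,
              algebraMap (Kf n) (Lf n) (C d i j)
                * (hbar n
                    - algebraMap (Kf n) (Lf n)
                        ((alpha n j - alpha n i) / (d : Kf n)))⁻¹
                * algebraMap (Kf n) (Lf n) (v d j))

/-- The coefficient of `z^a q^D` in
`Φ^η_{F,F′}(ħ,z,q) = ∑ᵢ (η(αᵢ) e^{αᵢ z} / ∏_{k≠i}(αᵢ−α_k)) F(αᵢ,ħ,q e^{ħz}) F′(αᵢ,−ħ,q)`.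
(Only the values `η(αᵢ)` of the rational function `η` enter the definition, so `η` is
represented by its tuple of values `eta : Fin n → Kf n`.) -/
def PhiCoeff (n : ℕ) (eta : Fin n → Kf n) (F F' : Fin n → PowerSeries (Lf n))
    (a D : ℕ) : Lf n :=
  ∑ i : Fin n, ∑ d ∈ Finset.range (D + 1), ∑ m ∈ Finset.range (a + 1),
    algebraMap (Kf n) (Lf n)
        (eta i / (∏ k ∈ Finset.univ.erase i, (alpha n i - alpha n k))
          * (alpha n i ^ m / (Nat.factorial m : Kf n))
          * ((d : Kf n) ^ (a - m) / (Nat.factorial (a - m) : Kf n)))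
      * hbar n ^ (a - m)
      * PowerSeries.coeff (R := Lf n) d (F i)
      * negH n (PowerSeries.coeff (R := Lf n) (D - d) (F' i))

/-- The η mutual polynomiality condition: every coefficient of `z^a q^D` of `Φ^η_{F,F′}`
is a polynomial in `ħ`. -/
def MPC (n : ℕ) (eta : Fin n → Kf n) (F F' : Fin n → PowerSeries (Lf n)) : Prop :=
  ∀ a D : ℕ, IsPolyH n (PhiCoeff n eta F F' a D)

/-- The operator `{x + ħ·q·d/dq}` on `H_α⟪ħ⟫[[q]]`, in terms of the evaluations at the `αᵢ`:
the coefficient of `q^d` of the `i`-th component is multiplied by `αᵢ + d·ħ` resp. gets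
`(αᵢ + dħ)·(coefficient)`. -/
def DOp (n : ℕ) (F' : Fin n → PowerSeries (Lf n)) : Fin n → PowerSeries (Lf n) :=
  fun i => PowerSeries.mk fun d =>
    (algebraMap (Kf n) (Lf n) (alpha n i) + (d : Lf n) * hbar n)
      * PowerSeries.coeff (R := Lf n) d (F' i)

/-!
On the component at `αᵢ`, the operator `{x + ħ q d/dq}` multiplies the coefficient of `q^d` by
the linear polynomial `αᵢ + dħ`. Multiplication by a polynomial preserves rationality in `ħ`
and regularity at a point, and so does division by it where it does not vanish; `αᵢ + dħ` is
a nonzero polynomial and takes the value `2αᵢ - αⱼ ≠ 0` at `ħ = (αᵢ - αⱼ)/d`. So the hypotheses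
of `C`-recursivity for `{x + ħ q d/dq}F′` give those for `F′`. At the pole `c = (αⱼ - αᵢ)/d`,
the new `q^(d*-d)`-coefficient of the `j`-th component has value `(αᵢ + d*c)` times the old one,
and `(αᵢ + d*ħ) - (αᵢ + d*c) = d*(ħ - c)`, so the new polar part is `αᵢ + d*ħ` times the old one
up to a constant; multiplying the old Laurent polynomial by `αᵢ + d*ħ` does the rest.

For the mutual polynomiality condition, the `zᵃ`-coefficient of `e^{αᵢz} e^{dħz}` is
`(αᵢ + dħ)ᵃ/a!`, and under `ħ ↦ -ħ` the factor `αᵢ + (D-d)ħ` becomes `(αᵢ + dħ) - Dħ`. Hence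
the `zᵃq^D`-coefficient of `Φ^η` for `(F, {x + ħ q d/dq}F′)` is
`(a+1)·Φ^η_{a+1,D} - Dħ·Φ^η_{a,D}` for `(F, F′)`, a polynomial in `ħ`.
-/

variable {n : ℕ}

open Polynomial

theorem sum_range_algebraMap_pow_div_factorial {K A : Type*} [Field K] [CharZero K] [CommRing A]
    [Algebra K A] (x y : K) (t : A) (a : ℕ) :
    ∑ m ∈ Finset.range (a + 1),
        algebraMap K A (x ^ m / m.factorial * (y ^ (a - m) / (a - m).factorial)) * t ^ (a - m)
      = algebraMap K A (a.factorial : K)⁻¹ * (algebraMap K A x + algebraMap K A y * t) ^ a := by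
  rw [add_pow, Finset.mul_sum]
  refine Finset.sum_congr rfl fun m hm => ?_
  have hma : m ≤ a := Nat.lt_succ_iff.mp (Finset.mem_range.mp hm)
  have hfac : (a.factorial : K) = a.choose m * m.factorial * (a - m).factorial := by
    exact_mod_cast (Nat.choose_mul_factorial_mul_factorial hma).symm
  have hcoeff : x ^ m / m.factorial * (y ^ (a - m) / (a - m).factorial)
      = (a.factorial : K)⁻¹ * (x ^ m * y ^ (a - m) * a.choose m) := by
    have hm₁ := Nat.factorial_ne_zero m
    have hm₂ := Nat.factorial_ne_zero (a - m)
    have hchoose := (Nat.choose_pos hma).ne'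
    rw [hfac]
    field_simp
  rw [hcoeff]
  simp only [map_mul, map_pow, map_natCast]
  ring

lemma algebraMap_eq_single (c : Kf n) :
    algebraMap (Kf n) (Lf n) c = HahnSeries.single (0 : ℤ) c := by
  rw [HahnSeries.algebraMap_apply', PowerSeries.algebraMap_apply, Algebra.algebraMap_self,
    RingHom.id_apply, HahnSeries.ofPowerSeries_C, HahnSeries.C_apply]

lemma hbar_sub_algebraMap_ne_zero (c : Kf n) : hbar n - algebraMap (Kf n) (Lf n) c ≠ 0 := by
  intro h
  have h₁ := congrArg (HahnSeries.coeff · (-1)) h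
  simp [hbar, algebraMap_eq_single, HahnSeries.coeff_single_of_ne] at h₁

lemma algebraMap_ne_zero_of_eval_ne_zero {p : MvPolynomial (Fin n) ℚ} (x : Fin n → ℚ)
    (hp : MvPolynomial.eval x p ≠ 0) : algebraMap _ (Kf n) p ≠ 0 := fun h => by
  rw [map_eq_zero_iff _ (IsFractionRing.injective _ _)] at h
  simp [h] at hp

lemma alpha_ne_zero (i : Fin n) : alpha n i ≠ 0 :=
  algebraMap_ne_zero_of_eval_ne_zero (fun _ => 1) (by simp)

lemma two_mul_alpha_sub_alpha_ne_zero {i j : Fin n} (hij : i ≠ j) :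
    2 * alpha n i - alpha n j ≠ 0 := by
  have h := algebraMap_ne_zero_of_eval_ne_zero (n := n)
    (p := 2 * MvPolynomial.X i - MvPolynomial.X j) (Pi.single i 1)
    (by simp [hij.symm])
  simpa [alpha, map_ofNat] using h

lemma IsRatH.of_aeval_mul {P : (Kf n)[X]} (hP : P ≠ 0) {x : Lf n}
    (h : IsRatH n (aeval (hbar n) P * x)) : IsRatH n x := by
  obtain ⟨A, B, hB, hAB⟩ := h
  exact ⟨A, B * P, mul_ne_zero hB hP, by rw [map_mul, mul_assoc, hAB]⟩

lemma RegAt.of_aeval_mul {P : (Kf n)[X]} {x : Lf n} {c : Kf n} (hP : P.eval c ≠ 0)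
    (h : RegAt n (aeval (hbar n) P * x) c) : RegAt n x c := by
  obtain ⟨-, A, B, hB, hAB, -⟩ := h
  exact ⟨_, A, B * P, by simp [hB, hP], by rw [map_mul, mul_assoc, hAB], rfl⟩

lemma RegEvalAt.aeval_mul (P : (Kf n)[X]) {x : Lf n} {c v : Kf n} (h : RegEvalAt n x c v) :
    RegEvalAt n (aeval (hbar n) P * x) c (P.eval c * v) := by
  obtain ⟨A, B, hB, hAB, rfl⟩ := h
  exact ⟨P * A, B, hB, by rw [map_mul, ← hAB]; ring, by rw [eval_mul]; ring⟩

variable (n) in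
def laurentPolynomials : Subalgebra (Kf n) (Lf n) where
  carrier := {x | IsLaurentPolyH n x}
  mul_mem' hx hy := (hx.add hy).subset HahnSeries.support_mul_subset
  add_mem' hx hy := (hx.union hy).subset (HahnSeries.support_add_subset _ _)
  algebraMap_mem' c := by
    rw [Set.mem_ofPred_eq, algebraMap_eq_single]
    exact (Set.finite_singleton 0).subset HahnSeries.support_single_subset

lemma hbar_mem_laurentPolynomials : hbar n ∈ laurentPolynomials n :=
  (Set.finite_singleton _).subset HahnSeries.support_single_subset

lemma aeval_mem_laurentPolynomials (P : (Kf n)[X]) : aeval (hbar n) P ∈ laurentPolynomials n :=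
  Algebra.adjoin_le (Set.singleton_subset_iff.mpr hbar_mem_laurentPolynomials)
    (aeval_mem_adjoin_singleton _ _)

lemma isPolyH_iff_mem_range {x : Lf n} :
    IsPolyH n x ↔ x ∈ (aeval (R := Kf n) (hbar n)).range := by
  simp only [IsPolyH, AlgHom.mem_range, eq_comm]

lemma negH_coeff (x : Lf n) (a : ℤ) : (negH n x).coeff a = (-1) ^ a * x.coeff a := rfl

lemma negH_single_zero (c : Kf n) : negH n (HahnSeries.single 0 c) = HahnSeries.single 0 c := by
  ext a
  by_cases ha : a = 0 <;> simp [negH, ha]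

lemma support_negH (x : Lf n) : (negH n x).support = x.support := by
  ext a
  simp [negH, zpow_ne_zero]

lemma negH_mul (x y : Lf n) : negH n (x * y) = negH n x * negH n y := by
  ext a
  simp only [negH_coeff, HahnSeries.coeff_mul, Finset.mul_sum]
  refine Finset.sum_congr (by ext; simp [support_negH]) fun ij hij => ?_
  rw [← (Finset.mem_antidiagonal.mp hij).2.2, zpow_add₀ (neg_ne_zero.mpr one_ne_zero)]
  ring

variable (n) in
def negHAlgHom : Lf n →ₐ[Kf n] Lf n where
  toFun := negH n
  map_one' := by simpa using negH_single_zero (n := n) 1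
  map_mul' := negH_mul
  map_zero' := by ext; simp [negH]
  map_add' x y := by ext; simp [negH, mul_add]
  commutes' c := by simpa [algebraMap_eq_single] using negH_single_zero c

lemma negHAlgHom_hbar : negHAlgHom n (hbar n) = -hbar n := by
  ext a
  by_cases ha : a = -1 <;> simp [negHAlgHom, negH, hbar, ha, HahnSeries.coeff_single_of_ne]

lemma coeff_dOp (F' : Fin n → PowerSeries (Lf n)) (i : Fin n) (d : ℕ) :
    PowerSeries.coeff d (DOp n F' i)
      = aeval (hbar n) (Polynomial.C (alpha n i) + (d : (Kf n)[X]) * X)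
          * PowerSeries.coeff d (F' i) := by
  simp [DOp]

def polarPart (C : ℕ → Fin n → Fin n → Kf n) (i : Fin n) (dstar : ℕ)
    (v : ℕ → Fin n → Kf n) : Lf n :=
  ∑ d ∈ Finset.Icc 1 dstar, ∑ j ∈ Finset.univ.erase i,
    algebraMap (Kf n) (Lf n) (C d i j)
      * (hbar n - algebraMap (Kf n) (Lf n) ((alpha n j - alpha n i) / (d : Kf n)))⁻¹
      * algebraMap (Kf n) (Lf n) (v d j)

lemma polarPart_scale (C : ℕ → Fin n → Fin n → Kf n) (i : Fin n) (dstar : ℕ)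
    (v : ℕ → Fin n → Kf n) :
    polarPart C i dstar
        (fun d j => (alpha n i + dstar * ((alpha n j - alpha n i) / (d : Kf n))) * v d j)
      = aeval (hbar n) (Polynomial.C (alpha n i) + (dstar : (Kf n)[X]) * X)
            * polarPart C i dstar v
        - algebraMap (Kf n) (Lf n)
            (∑ d ∈ Finset.Icc 1 dstar, ∑ j ∈ Finset.univ.erase i, dstar * C d i j * v d j) := by
  simp only [polarPart, Finset.mul_sum, map_sum, ← Finset.sum_sub_distrib]
  refine Finset.sum_congr rfl fun d _ => Finset.sum_congr rfl fun j _ => ?_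
  have hu := hbar_sub_algebraMap_ne_zero (n := n) ((alpha n j - alpha n i) / d)
  generalize (alpha n j - alpha n i) / (d : Kf n) = c at hu ⊢
  simp only [map_mul, map_add, map_natCast, aeval_C, aeval_X]
  field_simp
  ring

lemma isRatH_of_isRatH_coeff_dOp {F' : Fin n → PowerSeries (Lf n)} {i : Fin n} {d : ℕ}
    (h : IsRatH n (PowerSeries.coeff d (DOp n F' i))) : IsRatH n (PowerSeries.coeff d (F' i)) := by
  rw [coeff_dOp] at h
  refine h.of_aeval_mul fun h0 => alpha_ne_zero i ?_
  simpa using congrArg (coeff · 0) h0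

lemma regAt_of_regAt_coeff_dOp {F' : Fin n → PowerSeries (Lf n)} {i j : Fin n} (hij : i ≠ j)
    {d : ℕ} (hd : d ≠ 0)
    (h : RegAt n (PowerSeries.coeff d (DOp n F' i)) ((alpha n i - alpha n j) / d)) :
    RegAt n (PowerSeries.coeff d (F' i)) ((alpha n i - alpha n j) / d) := by
  rw [coeff_dOp] at h
  refine h.of_aeval_mul ?_
  convert two_mul_alpha_sub_alpha_ne_zero hij using 1
  simp only [eval_add, eval_C, eval_mul, eval_natCast, eval_X]
  field_simp
  ring

theorem CRecursive.dOp {C : ℕ → Fin n → Fin n → Kf n} {F' : Fin n → PowerSeries (Lf n)}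
    (hrec : CRecursive n C F') : CRecursive n C (DOp n F') := by
  intro dstar hrat hreg i
  obtain ⟨v, hv, hlaurent⟩ := hrec dstar
    (fun d hd₁ hd₂ k => isRatH_of_isRatH_coeff_dOp (hrat d hd₁ hd₂ k))
    (fun d hd₁ hd₂ k j hkj => regAt_of_regAt_coeff_dOp hkj (by omega) (hreg d hd₁ hd₂ k j hkj))
    i
  refine ⟨fun d j => (alpha n i + dstar * ((alpha n j - alpha n i) / d)) * v d j,
    fun d j hd₁ hd₂ hji => ?_, ?_⟩
  · rw [coeff_dOp]
    convert (hv d j hd₁ hd₂ hji).aeval_mul _ using 2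
    have hd : (d : Kf n) ≠ 0 := Nat.cast_ne_zero.mpr (by omega)
    simp only [Nat.cast_sub hd₂, eval_add, eval_C, eval_mul, eval_sub, eval_natCast, eval_X]
    field_simp
    ring
  · show IsLaurentPolyH n (PowerSeries.coeff dstar (DOp n F' i) - polarPart C i dstar _)
    rw [coeff_dOp, polarPart_scale, ← sub_add, ← mul_sub]
    exact add_mem (mul_mem (aeval_mem_laurentPolynomials _) hlaurent) (algebraMap_mem _ _)

lemma phiCoeff_eq (eta : Fin n → Kf n) (F F' : Fin n → PowerSeries (Lf n)) (a D : ℕ) :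
    PhiCoeff n eta F F' a D
      = ∑ i : Fin n, ∑ d ∈ Finset.range (D + 1),
          algebraMap (Kf n) (Lf n)
              (eta i / (∏ k ∈ Finset.univ.erase i, (alpha n i - alpha n k)))
            * algebraMap (Kf n) (Lf n) (a.factorial : Kf n)⁻¹
            * (algebraMap (Kf n) (Lf n) (alpha n i) + (d : Lf n) * hbar n) ^ a
            * PowerSeries.coeff d (F i)
            * negH n (PowerSeries.coeff (D - d) (F' i)) := by
  refine Finset.sum_congr rfl fun i _ => Finset.sum_congr rfl fun d _ => ?_
  rw [← map_natCast (algebraMap (Kf n) (Lf n)) d, mul_assoc _ _ (_ ^ a),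
    ← sum_range_algebraMap_pow_div_factorial, Finset.mul_sum, Finset.sum_mul, Finset.sum_mul]
  refine Finset.sum_congr rfl fun m _ => ?_
  simp only [map_mul]
  ring

lemma negH_coeff_dOp (F' : Fin n → PowerSeries (Lf n)) (i : Fin n) (k : ℕ) :
    negH n (PowerSeries.coeff k (DOp n F' i))
      = (algebraMap (Kf n) (Lf n) (alpha n i) - (k : Lf n) * hbar n)
          * negH n (PowerSeries.coeff k (F' i)) := by
  change negHAlgHom n _ = _ * negHAlgHom n _
  simp only [DOp, PowerSeries.coeff_mk, map_mul, map_add, AlgHom.commutes, map_natCast,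
    negHAlgHom_hbar]
  ring

lemma phiCoeff_dOp (eta : Fin n → Kf n) (F F' : Fin n → PowerSeries (Lf n)) (a D : ℕ) :
    PhiCoeff n eta F (DOp n F') a D
      = ((a + 1 : ℕ) : Lf n) * PhiCoeff n eta F F' (a + 1) D
        - (D : Lf n) * hbar n * PhiCoeff n eta F F' a D := by
  simp only [phiCoeff_eq, Finset.mul_sum, ← Finset.sum_sub_distrib]
  refine Finset.sum_congr rfl fun i _ => Finset.sum_congr rfl fun d hd => ?_
  have hdD : d ≤ D := Nat.lt_succ_iff.mp (Finset.mem_range.mp hd)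
  have hfac : ((a + 1 : ℕ) : Lf n) * algebraMap (Kf n) (Lf n) ((a + 1).factorial : Kf n)⁻¹
      = algebraMap (Kf n) (Lf n) (a.factorial : Kf n)⁻¹ := by
    rw [← map_natCast (algebraMap (Kf n) (Lf n)), ← map_mul, Nat.factorial_succ, Nat.cast_mul,
      mul_inv, ← mul_assoc, mul_inv_cancel₀ (Nat.cast_ne_zero.mpr a.succ_ne_zero), one_mul]
  rw [negH_coeff_dOp, Nat.cast_sub hdD, ← hfac]
  ring

theorem MPC.dOp {eta : Fin n → Kf n} {F F' : Fin n → PowerSeries (Lf n)} (h : MPC n eta F F') :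
    MPC n eta F (DOp n F') := by
  intro a D
  rw [isPolyH_iff_mem_range, phiCoeff_dOp]
  have hħ : hbar n ∈ (aeval (R := Kf n) (hbar n)).range := ⟨X, aeval_X _⟩
  exact sub_mem (mul_mem (natCast_mem _ _) (isPolyH_iff_mem_range.mp (h _ _)))
    (mul_mem (mul_mem (natCast_mem _ _) hħ) (isPolyH_iff_mem_range.mp (h _ _)))

theorem statement1_general (n : ℕ)
    (C : ℕ → Fin n → Fin n → Kf n)
    (eta : Fin n → Kf n)
    (F F' : Fin n → PowerSeries (Lf n))
    (hrec : CRecursive n C F') :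
    CRecursive n C (DOp n F') ∧
      (MPC n eta F F' → MPC n eta F (DOp n F')) :=
  ⟨hrec.dOp, MPC.dOp⟩

/-- Lemma `Phistr_lmm4`(i): if each `F(αᵢ,ħ,q)` has all its `q`-coefficients
rational in `ħ` and `F′` is `C`-recursive, then `{x + ħ q d/dq}F′` is `C`-recursive; and if
moreover `(F,F′)` satisfies the `η`-MPC, then so does `(F, {x + ħ q d/dq}F′)`. -/
theorem statement1 (n : ℕ) (hn : 1 ≤ n)
    (C : ℕ → Fin n → Fin n → Kf n)
    (eta : Fin n → Kf n) (heta : ∀ i : Fin n, eta i ≠ 0)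
    (F F' : Fin n → PowerSeries (Lf n))
    (hF : ∀ i : Fin n, ∀ d : ℕ, IsRatH n (PowerSeries.coeff (R := Lf n) d (F i)))
    (hrec : CRecursive n C F') :
    CRecursive n C (DOp n F') ∧
      (MPC n eta F F' → MPC n eta F (DOp n F')) :=
  statement1_general n C eta F F' hrec

end SQ
end
end

section
/- For each i ∈ {1,…,n} there exists a unique power series L_i ∈ ℚ_α[[q]] with constant term α_i satisfying ∏_{k=1}^{n}(L_i − α_k) = q·a^a·L_i^{|a|}; moreover, in the polynomial ring ℚ_α[[q]][Y], ∏_{k=1}^{n}(Y − α_k) − q·a^a·Y^{|a|} = c(q)·∏_{i=1}^{n}(Y − L_i), where c(q) = 1 − a^a q if |a| = n and c(q) = 1 if |a| < n. -/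
/-!
Modulo `q` the polynomial `f(Y) = ∏ₖ(Y − αₖ) − q·a^a·Y^{|a|}` reduces to `∏ₖ(Y − αₖ)`, whose
roots `αᵢ` are simple.  As `ℚ_α⟦q⟧` is `q`-adically complete, Hensel's lemma lifts each `αᵢ` to a
root `Lᵢ` of `f`, unique among power series with constant term `αᵢ`.  The coefficient of `Y^n` in
`f` is `c(q)`, a unit, so `f` has degree `n`; having the `n` distinct roots `Lᵢ` in the domain
`ℚ_α⟦q⟧`, it equals `c(q)·∏ᵢ(Y − Lᵢ)`.
-/

noncomputable section

namespace SQ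

/-- `|a| = ∑ |a_k|`. -/
def absSum (l : ℕ) (a : Fin l → ℤ) : ℕ := ∑ k : Fin l, (a k).natAbs

/-- `a^a = ∏ a_k^{|a_k|}`, as an element of `ℚ_α`. -/
def aPow (n l : ℕ) (a : Fin l → ℤ) : Kf n := ((∏ k : Fin l, a k ^ (a k).natAbs : ℤ) : Kf n)

/-- The defining property of `L_i ∈ ℚ_α[[q]]`: constant term `αᵢ` and
`∏ₖ(L − αₖ) = q·a^a·L^{|a|}`. -/
def IsLSeries (n l : ℕ) (a : Fin l → ℤ) (i : Fin n) (L : PowerSeries (Kf n)) : Prop :=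
  PowerSeries.constantCoeff L = alpha n i ∧
    ∏ k : Fin n, (L - PowerSeries.C (alpha n k))
      = PowerSeries.X * PowerSeries.C (aPow n l a) * L ^ absSum l a

end SQ

open Polynomial
open scoped PowerSeries

namespace HenselianRing

theorem exists_isRoot_of_isUnit_leadingCoeff {R : Type*} [CommRing R] {I : Ideal R}
    [HenselianRing R I] {f : R[X]} (hf : IsUnit f.leadingCoeff) {a₀ : R} (h₁ : f.eval a₀ ∈ I)
    (h₂ : IsUnit (Ideal.Quotient.mk I (f.derivative.eval a₀))) :
    ∃ a, f.IsRoot a ∧ a - a₀ ∈ I := by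
  obtain ⟨u, hu⟩ := hf
  have hmonic : (C ((u⁻¹ : Rˣ) : R) * f).Monic :=
    monic_C_mul_of_mul_leadingCoeff_eq_one (by rw [← hu, Units.inv_mul])
  have hunit : IsUnit (Ideal.Quotient.mk I ((u⁻¹ : Rˣ) : R)) := u⁻¹.isUnit.map _
  obtain ⟨a, ha, ha₀⟩ := HenselianRing.is_henselian _ hmonic a₀
    (by rw [eval_mul, eval_C]; exact I.mul_mem_left _ h₁)
    (by rw [derivative_C_mul, eval_mul, eval_C, map_mul]; exact hunit.mul h₂)
  refine ⟨a, ?_, ha₀⟩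
  rwa [IsRoot, eval_mul, eval_C, u⁻¹.isUnit.mul_right_eq_zero] at ha

end HenselianRing

namespace PowerSeries

variable {R : Type*} [CommRing R]

theorem constantCoeff_eval (f : R⟦X⟧[X]) (L : R⟦X⟧) :
    constantCoeff (f.eval L) = (f.map constantCoeff).eval (constantCoeff L) :=
  (eval_map_apply ..).symm

theorem exists_isRoot_of_isUnit_leadingCoeff {f : R⟦X⟧[X]} (hf : IsUnit f.leadingCoeff) {x : R}
    (hx : (f.map constantCoeff).IsRoot x)
    (hx' : IsUnit ((f.map constantCoeff).derivative.eval x)) :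
    ∃ L : R⟦X⟧, f.IsRoot L ∧ constantCoeff L = x := by
  have hCx : constantCoeff (C x) = x := constantCoeff_C x
  obtain ⟨L, hL, hLx⟩ := HenselianRing.exists_isRoot_of_isUnit_leadingCoeff
    (I := Ideal.span {X}) hf (a₀ := C x)
    (by rw [Ideal.mem_span_singleton, X_dvd_iff, constantCoeff_eval, hCx]; exact hx)
    (by
      refine IsUnit.map _ (isUnit_iff_constantCoeff.mpr ?_)
      rwa [constantCoeff_eval, hCx, ← derivative_map])
  refine ⟨L, hL, ?_⟩
  rw [Ideal.mem_span_singleton, X_dvd_iff, map_sub, hCx, sub_eq_zero] at hLx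
  exact hLx

theorem eq_of_isRoot_of_constantCoeff_eq [IsLocalRing R] {f : R⟦X⟧[X]} {L L' : R⟦X⟧}
    (hL : f.IsRoot L) (hL' : f.IsRoot L') (h : constantCoeff L = constantCoeff L')
    (hf' : IsUnit ((f.map constantCoeff).derivative.eval (constantCoeff L))) : L = L' := by
  refine IsLocalRing.eq_of_eval_eq_zero_of_not_isUnit_sub hL hL' ?_ ?_
  · rw [isUnit_iff_constantCoeff, map_sub, h, sub_self]
    exact not_isUnit_zero
  · rwa [isUnit_iff_constantCoeff, constantCoeff_eval, ← derivative_map]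

end PowerSeries

theorem Lagrange.eval_derivative_nodal_ne_zero {F ι : Type*} [Field F] [DecidableEq ι]
    {s : Finset ι} {v : ι → F} (hvs : Set.InjOn v s) {i : ι} (hi : i ∈ s) :
    (derivative (nodal s v)).eval (v i) ≠ 0 := fun h =>
  nodalWeight_ne_zero hvs hi (by rw [nodalWeight_eq_eval_derivative_nodal hi, h, inv_zero])

theorem Polynomial.eq_C_leadingCoeff_mul_prod_X_sub_C {R : Type*} [CommRing R] [IsDomain R]
    {ι : Type*} [Fintype ι] {p : R[X]} {L : ι → R} (hL : Function.Injective L)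
    (hroot : ∀ i, p.IsRoot (L i)) (hdeg : p.natDegree = Fintype.card ι) :
    p = C p.leadingCoeff * ∏ i, (X - C (L i)) := by
  rcases eq_or_ne p 0 with rfl | hp
  · simp
  have hle : Finset.univ.val.map L ≤ p.roots :=
    (Multiset.le_iff_subset (Finset.univ.nodup.map hL)).mpr fun x hx => by
      obtain ⟨i, -, rfl⟩ := Multiset.mem_map.mp hx
      exact (mem_roots hp).mpr (hroot i)
  have hroots : Finset.univ.val.map L = p.roots :=
    Multiset.eq_of_le_of_card_le hle (by simpa [hdeg] using card_roots' p)
  calc p = C p.leadingCoeff * (p.roots.map (X - C ·)).prod :=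
        (C_leadingCoeff_mul_prod_multiset_X_sub_C (by rw [← hroots]; simp [hdeg])).symm
    _ = C p.leadingCoeff * ∏ i, (X - C (L i)) := by rw [← hroots, Multiset.map_map]; rfl

namespace SQ

lemma alpha_injective (n : ℕ) : Function.Injective (alpha n) := fun _ _ h =>
  MvPolynomial.X_injective (IsFractionRing.injective (MvPolynomial (Fin n) ℚ) (Kf n) h)

section PerturbedNodal

variable {K : Type*} [CommRing K] {ι : Type*} [Fintype ι]

def perturbedNodal (α : ι → K) (c : K) (m : ℕ) : K⟦X⟧[X] :=
  Lagrange.nodal Finset.univ (PowerSeries.C ∘ α) - C (PowerSeries.X * PowerSeries.C c) * X ^ m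

variable (α : ι → K) (c : K) {m : ℕ}

lemma eval_perturbedNodal (L : K⟦X⟧) :
    (perturbedNodal α c m).eval L
      = ∏ k, (L - PowerSeries.C (α k)) - PowerSeries.X * PowerSeries.C c * L ^ m := by
  simp only [perturbedNodal, eval_sub, Lagrange.eval_nodal, Function.comp_apply, eval_mul,
    eval_pow, eval_X, eval_C]

lemma map_constantCoeff_perturbedNodal :
    (perturbedNodal α c m).map PowerSeries.constantCoeff = Lagrange.nodal Finset.univ α := by
  simp [perturbedNodal, Polynomial.map_prod, Lagrange.nodal]

variable [Nontrivial K]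

lemma coeff_perturbedNodal_card :
    (perturbedNodal α c m).coeff (Fintype.card ι)
      = if m = Fintype.card ι then 1 - PowerSeries.C c * PowerSeries.X else 1 := by
  have hnodal := Lagrange.nodal_monic (s := Finset.univ) (v := PowerSeries.C ∘ α)
  rw [Monic, leadingCoeff, Lagrange.natDegree_nodal, Finset.card_univ] at hnodal
  rw [perturbedNodal, coeff_sub, coeff_C_mul, coeff_X_pow, hnodal]
  split_ifs <;> first | omega | ring

lemma isUnit_coeff_perturbedNodal_card :
    IsUnit ((perturbedNodal α c m).coeff (Fintype.card ι)) := by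
  rw [coeff_perturbedNodal_card, PowerSeries.isUnit_iff_constantCoeff]
  split_ifs <;> simp

lemma natDegree_perturbedNodal (hm : m ≤ Fintype.card ι) :
    (perturbedNodal α c m).natDegree = Fintype.card ι := by
  refine le_antisymm ((natDegree_sub_le _ _).trans (max_le ?_ ?_))
    (le_natDegree_of_ne_zero (isUnit_coeff_perturbedNodal_card α c).ne_zero)
  · exact Lagrange.natDegree_nodal.le
  · exact (natDegree_C_mul_le _ _).trans ((natDegree_X_pow_le m).trans hm)

lemma leadingCoeff_perturbedNodal (hm : m ≤ Fintype.card ι) :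
    (perturbedNodal α c m).leadingCoeff
      = if m = Fintype.card ι then 1 - PowerSeries.C c * PowerSeries.X else 1 := by
  rw [leadingCoeff, natDegree_perturbedNodal α c hm, coeff_perturbedNodal_card]

lemma isUnit_leadingCoeff_perturbedNodal (hm : m ≤ Fintype.card ι) :
    IsUnit (perturbedNodal α c m).leadingCoeff := by
  rw [leadingCoeff, natDegree_perturbedNodal α c hm]
  exact isUnit_coeff_perturbedNodal_card α c

end PerturbedNodal

lemma isLSeries_iff {n l : ℕ} {a : Fin l → ℤ} {i : Fin n} {L : (Kf n)⟦X⟧} :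
    IsLSeries n l a i L ↔ (perturbedNodal (alpha n) (aPow n l a) (absSum l a)).IsRoot L
      ∧ PowerSeries.constantCoeff L = alpha n i := by
  rw [IsLSeries, IsRoot, eval_perturbedNodal, sub_eq_zero, and_comm]

theorem statement14_general (n l : ℕ) (a : Fin l → ℤ)
    (hm : absSum l a ≤ n) :
    (∀ i : Fin n, ∃! L : PowerSeries (Kf n), IsLSeries n l a i L) ∧
    (∀ L : Fin n → PowerSeries (Kf n), (∀ i : Fin n, IsLSeries n l a i (L i)) →
      (∏ k : Fin n,
          ((Polynomial.X : Polynomial (PowerSeries (Kf n)))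
            - Polynomial.C (PowerSeries.C (alpha n k))))
        - Polynomial.C (PowerSeries.X * PowerSeries.C (aPow n l a))
            * Polynomial.X ^ absSum l a
      = Polynomial.C
          (if absSum l a = n then
            1 - PowerSeries.C (aPow n l a) * PowerSeries.X
          else 1)
          * ∏ i : Fin n,
              ((Polynomial.X : Polynomial (PowerSeries (Kf n)))
                - Polynomial.C (L i))) := by
  set f := perturbedNodal (alpha n) (aPow n l a) (absSum l a)
  have hm' : absSum l a ≤ Fintype.card (Fin n) := by rwa [Fintype.card_fin]
  have hsimple (i : Fin n) :
      IsUnit ((f.map PowerSeries.constantCoeff).derivative.eval (alpha n i)) := by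
    rw [map_constantCoeff_perturbedNodal]
    exact (Lagrange.eval_derivative_nodal_ne_zero (alpha_injective n).injOn
      (Finset.mem_univ i)).isUnit
  refine ⟨fun i => ?_, fun L hL => ?_⟩
  · obtain ⟨L, hL, hL₀⟩ := PowerSeries.exists_isRoot_of_isUnit_leadingCoeff
      (isUnit_leadingCoeff_perturbedNodal _ _ hm') (by
        rw [map_constantCoeff_perturbedNodal]
        exact Lagrange.eval_nodal_at_node (Finset.mem_univ i)) (hsimple i)
    refine ⟨L, isLSeries_iff.mpr ⟨hL, hL₀⟩, fun L' hL' => ?_⟩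
    obtain ⟨hL'root, hL'₀⟩ := isLSeries_iff.mp hL'
    exact (PowerSeries.eq_of_isRoot_of_constantCoeff_eq hL hL'root (hL₀.trans hL'₀.symm)
      (hL₀ ▸ hsimple i)).symm
  · have hLinj : Function.Injective L := fun i j h =>
      alpha_injective n (by rw [← (hL i).1, ← (hL j).1, h])
    have hfactor := Polynomial.eq_C_leadingCoeff_mul_prod_X_sub_C hLinj
      (fun i => (isLSeries_iff.mp (hL i)).1) (natDegree_perturbedNodal _ _ hm')
    rwa [leadingCoeff_perturbedNodal _ _ hm', Fintype.card_fin] at hfactor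

/-- for each `i` there is a unique `L_i ∈ ℚ_α[[q]]` with constant term `αᵢ`
satisfying `∏ₖ(L_i − αₖ) = q·a^a·L_i^{|a|}`; moreover, in `ℚ_α[[q]][Y]`,
`∏ₖ(Y − αₖ) − q·a^a·Y^{|a|} = c(q)·∏ᵢ(Y − L_i)` with `c(q) = 1 − a^a q` if `|a| = n` and
`c(q) = 1` if `|a| < n`. -/
theorem statement14 (n l : ℕ) (hn : 1 ≤ n) (a : Fin l → ℤ) (ha : ∀ k, a k ≠ 0)
    (hm : absSum l a ≤ n) :
    (∀ i : Fin n, ∃! L : PowerSeries (Kf n), IsLSeries n l a i L) ∧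
    (∀ L : Fin n → PowerSeries (Kf n), (∀ i : Fin n, IsLSeries n l a i (L i)) →
      (∏ k : Fin n,
          ((Polynomial.X : Polynomial (PowerSeries (Kf n)))
            - Polynomial.C (PowerSeries.C (alpha n k))))
        - Polynomial.C (PowerSeries.X * PowerSeries.C (aPow n l a))
            * Polynomial.X ^ absSum l a
      = Polynomial.C
          (if absSum l a = n then
            1 - PowerSeries.C (aPow n l a) * PowerSeries.X
          else 1)
          * ∏ i : Fin n,
              ((Polynomial.X : Polynomial (PowerSeries (Kf n)))
                - Polynomial.C (L i))) :=
  statement14_general n l a hm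

end SQ
end
end
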